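/- arXiv:2504.11848 — 3 statements merged into one kernel-verified Lean document; each statement's English description precedes it below -/
import Mathlib

section
/- Let $A$ be a $\{0,1\}$-valued random variable and $U,W,X$ random variables with $W \perp A \mid (U,X)$ and $0 < \mathbb{P}(A=0 \mid U,W,X) < 1$ almost surely. Then $\frac{\mathbb{P}(A=1\mid W,X)}{\mathbb{P}(A=0\mid W,X)} = \mathbb{E}\left[\frac{\mathbb{P}(A=1\mid U,X)}{\mathbb{P}(A=0\mid U,X)} \,\Big|\, W, A=0, X\right]$ almost surely. -/
open MeasureTheory ProbabilityTheory

section MyAux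

open Set

section Aux

lemma my_comap_pair {Ω : Type*} {β γ : Type*} [mβ : MeasurableSpace β] [mγ : MeasurableSpace γ]
    (f : Ω → β) (g : Ω → γ) :
    MeasurableSpace.comap (fun ω => (f ω, g ω)) inferInstance
      = MeasurableSpace.comap f mβ ⊔ MeasurableSpace.comap g mγ := by
  rw [show (inferInstance : MeasurableSpace (β × γ))
      = mβ.comap Prod.fst ⊔ mγ.comap Prod.snd from rfl,
    MeasurableSpace.comap_sup, MeasurableSpace.comap_comp, MeasurableSpace.comap_comp]
  rfl

lemma my_condexp_pos_ae {Ω : Type*} {m : MeasurableSpace Ω} [mΩ : MeasurableSpace Ω]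
    {μ : Measure Ω} (hm : m ≤ mΩ) [IsFiniteMeasure μ]
    {f : Ω → ℝ} (hf : Integrable f μ) (hfpos : ∀ᵐ ω ∂μ, 0 < f ω) :
    ∀ᵐ ω ∂μ, 0 < (μ[f|m]) ω := by
  set g := μ[f|m] with hg
  have hgm : StronglyMeasurable[m] g := stronglyMeasurable_condExp
  have hgmm : Measurable[m] g := hgm.measurable
  have hsm : MeasurableSet[m] (g ⁻¹' Iic 0) := hgmm measurableSet_Iic
  have hsΩ : MeasurableSet (g ⁻¹' Iic 0) := hm _ hsm
  have key : ∫ x in g ⁻¹' Iic 0, g x ∂μ = ∫ x in g ⁻¹' Iic 0, f x ∂μ :=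
    setIntegral_condExp hm hf hsm
  have h1 : ∫ x in g ⁻¹' Iic 0, g x ∂μ ≤ 0 := by
    refine integral_nonpos_of_ae ((ae_restrict_iff' hsΩ).mpr ?_)
    exact Filter.Eventually.of_forall fun x hx => hx
  have h2 : 0 ≤ ∫ x in g ⁻¹' Iic 0, f x ∂μ :=
    integral_nonneg_of_ae (ae_restrict_of_ae (hfpos.mono fun x hx => hx.le))
  have hz : ∫ x in g ⁻¹' Iic 0, f x ∂μ = 0 := le_antisymm (key ▸ h1) h2
  have h0 : f =ᵐ[μ.restrict (g ⁻¹' Iic 0)] 0 := by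
    rw [← integral_eq_zero_iff_of_nonneg_ae
      (ae_restrict_of_ae (hfpos.mono fun x hx => hx.le)) hf.integrableOn]
    exact hz
  have hfalse : ∀ᵐ x ∂μ.restrict (g ⁻¹' Iic 0), False := by
    filter_upwards [h0, ae_restrict_of_ae hfpos] with x hx hx'
    rw [hx] at hx'
    exact lt_irrefl 0 hx'
  have hres : μ (g ⁻¹' Iic 0) = 0 := by
    have h5 : μ.restrict (g ⁻¹' Iic 0) = 0 :=
      ae_eq_bot.mp (Filter.eventually_false_iff_eq_bot.mp hfalse)
    rwa [Measure.restrict_eq_zero] at h5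
  rw [ae_iff]
  convert hres using 2
  ext x
  simp [not_lt]

/-- If conditionally on `m₁` the σ-algebra `mw` is independent of the event `B`, then adding
`mw` to the conditioning does not change the conditional probability of `B`. -/
lemma my_condexp_indicator_sup {Ω : Type*} {m₁ mw : MeasurableSpace Ω}
    [mΩ : MeasurableSpace Ω] {μ : Measure Ω} [IsProbabilityMeasure μ]
    (hm₁ : m₁ ≤ mΩ) (hmw : mw ≤ mΩ) {B : Set Ω} (hB : MeasurableSet B)
    (hInd : ∀ t, MeasurableSet[mw] t →
      μ[(t ∩ B).indicator (fun _ => (1:ℝ))|m₁]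
        =ᵐ[μ] μ[t.indicator (fun _ => (1:ℝ))|m₁] * μ[B.indicator (fun _ => (1:ℝ))|m₁]) :
    μ[B.indicator (fun _ => (1:ℝ))|m₁ ⊔ mw] =ᵐ[μ] μ[B.indicator (fun _ => (1:ℝ))|m₁] := by
  set f0 : Ω → ℝ := B.indicator (fun _ => (1:ℝ)) with hf0
  set g := μ[f0|m₁] with hgdef
  have hle : m₁ ⊔ mw ≤ mΩ := sup_le hm₁ hmw
  have hint : Integrable f0 μ := (integrable_const (1:ℝ)).indicator hB
  have hgint : Integrable g μ := integrable_condExp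
  -- the π-system generating `m₁ ⊔ mw`
  set P : Set (Set Ω) :=
    {s | ∃ t₁ t₂, MeasurableSet[m₁] t₁ ∧ MeasurableSet[mw] t₂ ∧ s = t₁ ∩ t₂} with hP
  have hgen : (m₁ ⊔ mw) = MeasurableSpace.generateFrom P := by
    refine le_antisymm (sup_le ?_ ?_) (MeasurableSpace.generateFrom_le ?_)
    · exact fun s hs => MeasurableSpace.measurableSet_generateFrom
        ⟨s, Set.univ, hs, MeasurableSet.univ, (Set.inter_univ s).symm⟩
    · exact fun s hs => MeasurableSpace.measurableSet_generateFrom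
        ⟨Set.univ, s, MeasurableSet.univ, hs, (Set.univ_inter s).symm⟩
    · rintro s ⟨t₁, t₂, h₁, h₂, rfl⟩
      exact ((le_sup_left : m₁ ≤ m₁ ⊔ mw) t₁ h₁).inter
        ((le_sup_right : mw ≤ m₁ ⊔ mw) t₂ h₂)
  have hPi : IsPiSystem P := by
    rintro s ⟨a, b, ha, hb, rfl⟩ t ⟨c, d, hc, hd, rfl⟩ -
    exact ⟨a ∩ c, b ∩ d, ha.inter hc, hb.inter hd, by rw [Set.inter_inter_inter_comm]⟩
  -- the set-integral identity on all `m₁ ⊔ mw`-measurable sets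
  have hsetint : ∀ ⦃s⦄, MeasurableSet[m₁ ⊔ mw] s →
      ∫ x in s, g x ∂μ = ∫ x in s, f0 x ∂μ := by
    refine MeasurableSpace.induction_on_inter (m := m₁ ⊔ mw)
      (C := fun s _ => ∫ x in s, g x ∂μ = ∫ x in s, f0 x ∂μ) hgen hPi ?_ ?_ ?_ ?_
    · simp
    · rintro s ⟨t₁, t₂, h₁, h₂, rfl⟩
      have ht₂Ω : MeasurableSet t₂ := hmw _ h₂
      have hindint : Integrable ((t₂ ∩ B).indicator (fun _ => (1:ℝ))) μ :=
        (integrable_const (1:ℝ)).indicator (ht₂Ω.inter hB)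
      have hindt₂ : Integrable (t₂.indicator (fun _ => (1:ℝ))) μ :=
        (integrable_const (1:ℝ)).indicator ht₂Ω
      have hgmul : Integrable (g * t₂.indicator (fun _ => (1:ℝ))) μ := by
        have h6 : Integrable (fun x => t₂.indicator (fun _ => (1:ℝ)) x * g x) μ :=
          hgint.bdd_mul (c := 1) hindt₂.aestronglyMeasurable
            (Filter.Eventually.of_forall fun x => by
              by_cases hx : x ∈ t₂ <;> simp [Set.indicator_apply, hx])
        exact h6.congr (Filter.Eventually.of_forall fun x => by
          simp [Pi.mul_apply, mul_comm])
      have lhs : ∫ x in t₁ ∩ t₂, f0 x ∂μ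
          = ∫ x in t₁, (μ[t₂.indicator (fun _ => (1:ℝ))|m₁] * g) x ∂μ := by
        calc ∫ x in t₁ ∩ t₂, f0 x ∂μ
            = ∫ x in t₁, t₂.indicator f0 x ∂μ := (setIntegral_indicator ht₂Ω).symm
          _ = ∫ x in t₁, (t₂ ∩ B).indicator (fun _ => (1:ℝ)) x ∂μ := by
              rw [hf0, Set.indicator_indicator]
          _ = ∫ x in t₁, (μ[(t₂ ∩ B).indicator (fun _ => (1:ℝ))|m₁]) x ∂μ :=
              (setIntegral_condExp hm₁ hindint h₁).symm
          _ = ∫ x in t₁, (μ[t₂.indicator (fun _ => (1:ℝ))|m₁] * g) x ∂μ :=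
              integral_congr_ae (ae_restrict_of_ae (hInd t₂ h₂))
      have rhs : ∫ x in t₁ ∩ t₂, g x ∂μ
          = ∫ x in t₁, (g * μ[t₂.indicator (fun _ => (1:ℝ))|m₁]) x ∂μ := by
        calc ∫ x in t₁ ∩ t₂, g x ∂μ
            = ∫ x in t₁, t₂.indicator g x ∂μ := (setIntegral_indicator ht₂Ω).symm
          _ = ∫ x in t₁, (g * t₂.indicator (fun _ => (1:ℝ))) x ∂μ := by
              refine integral_congr_ae (Filter.Eventually.of_forall fun x => ?_)
              by_cases hx : x ∈ t₂ <;> simp [Set.indicator_apply, hx]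
          _ = ∫ x in t₁, (μ[g * t₂.indicator (fun _ => (1:ℝ))|m₁]) x ∂μ :=
              (setIntegral_condExp hm₁ hgmul h₁).symm
          _ = ∫ x in t₁, (g * μ[t₂.indicator (fun _ => (1:ℝ))|m₁]) x ∂μ :=
              integral_congr_ae (ae_restrict_of_ae
                (condExp_mul_of_stronglyMeasurable_left stronglyMeasurable_condExp hgmul hindt₂))
      rw [rhs, lhs]
      refine integral_congr_ae (Filter.Eventually.of_forall fun x => ?_)
      simp [Pi.mul_apply, mul_comm]
    · intro t ht hC
      have htΩ : MeasurableSet t := hle t ht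
      have h1 := integral_add_compl htΩ hgint
      have h2 := integral_add_compl htΩ hint
      have h3 : ∫ x, g x ∂μ = ∫ x, f0 x ∂μ := integral_condExp hm₁
      linarith
    · intro f hdisj hmeas hC
      have h1 := hasSum_integral_iUnion (μ := μ) (fun i => hle _ (hmeas i)) hdisj
        hgint.integrableOn
      have h2 := hasSum_integral_iUnion (μ := μ) (fun i => hle _ (hmeas i)) hdisj
        hint.integrableOn
      rw [← h1.tsum_eq, ← h2.tsum_eq]
      exact tsum_congr hC
  exact (ae_eq_condExp_of_forall_setIntegral_eq hle hint
    (fun s _ _ => integrable_condExp.integrableOn)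
    (fun s hs _ => hsetint hs)
    ((stronglyMeasurable_condExp (m := m₁) (μ := μ) (f := f0)).mono
      (le_sup_left : m₁ ≤ m₁ ⊔ mw)).aestronglyMeasurable).symm

end Aux


section MainAux

lemma my_condexp_indicator_bdd {Ω : Type*} {m' : MeasurableSpace Ω}
    [mΩ : MeasurableSpace Ω] {μ : Measure Ω} [IsFiniteMeasure μ]
    (hm' : m' ≤ mΩ) {S : Set Ω} (hS : MeasurableSet S) :
    ∀ᵐ ω ∂μ, ‖(μ[S.indicator (fun _ => (1:ℝ))|m']) ω‖ ≤ 1 := by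
  have h0 : 0 ≤ᵐ[μ] μ[S.indicator (fun _ => (1:ℝ))|m'] :=
    condExp_nonneg (Filter.Eventually.of_forall fun x =>
      Set.indicator_nonneg (fun _ _ => zero_le_one) x)
  have h1 : μ[S.indicator (fun _ => (1:ℝ))|m'] ≤ᵐ[μ] μ[(fun _ => (1:ℝ))|m'] :=
    condExp_mono ((integrable_const (1:ℝ)).indicator hS) (integrable_const (1:ℝ))
      (Filter.Eventually.of_forall fun x => by
        by_cases hx : x ∈ S <;> simp [Set.indicator_apply, hx])
  rw [condExp_const hm'] at h1
  filter_upwards [h0, h1] with ω hω0 hω1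
  have hω0' : (0:ℝ) ≤ (μ[S.indicator (fun _ => (1:ℝ))|m']) ω := by simpa using hω0
  rw [Real.norm_eq_abs, abs_le]
  exact ⟨by linarith, hω1⟩

/-- Core argument, with abstract σ-algebras. -/
lemma my_main {Ω : Type*} {m2 mwx m3 : MeasurableSpace Ω} [mΩ : MeasurableSpace Ω]
    {μ : Measure Ω} [IsProbabilityMeasure μ]
    (hm2 : m2 ≤ mΩ) (hmwx : mwx ≤ mΩ) (hm3 : m3 ≤ mΩ)
    (hm2_m3 : m2 ≤ m3) (hmwx_m3 : mwx ≤ m3)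
    {B : Set Ω} (hB : MeasurableSet B)
    (hr : μ[B.indicator (fun _ => (1:ℝ))|m3] =ᵐ[μ] μ[B.indicator (fun _ => (1:ℝ))|m2])
    (hpos : ∀ᵐ ω ∂μ, 0 < (μ[B.indicator (fun _ => (1:ℝ))|m3]) ω)
    (hoddsint : Integrable (fun ω =>
      (μ[Bᶜ.indicator (fun _ => (1:ℝ))|m2]) ω / (μ[B.indicator (fun _ => (1:ℝ))|m2]) ω) μ) :
    (fun ω => (μ[Bᶜ.indicator (fun _ => (1:ℝ))|mwx]) ω
        / (μ[B.indicator (fun _ => (1:ℝ))|mwx]) ω)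
      =ᵐ[μ[|B]]
    (μ[|B])[(fun ω => (μ[Bᶜ.indicator (fun _ => (1:ℝ))|m2]) ω
        / (μ[B.indicator (fun _ => (1:ℝ))|m2]) ω)|mwx] := by
  classical
  set f0 : Ω → ℝ := B.indicator (fun _ => (1:ℝ)) with hf0def
  set f1 : Ω → ℝ := Bᶜ.indicator (fun _ => (1:ℝ)) with hf1def
  have hint0 : Integrable f0 μ := (integrable_const (1:ℝ)).indicator hB
  have hint1 : Integrable f1 μ := (integrable_const (1:ℝ)).indicator hB.compl
  set odds : Ω → ℝ := fun ω => (μ[f1|m2]) ω / (μ[f0|m2]) ω with hoddsdef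
  have hmf1 : Measurable[m2] (μ[f1|m2]) := stronglyMeasurable_condExp.measurable
  have hmf0 : Measurable[m2] (μ[f0|m2]) := stronglyMeasurable_condExp.measurable
  have hoddsm : StronglyMeasurable[m2] odds := by
    have h : Measurable[m2] odds := hmf1.div hmf0
    exact h.stronglyMeasurable
  -- positivity
  have hp0pos : ∀ᵐ ω ∂μ, 0 < (μ[f0|m2]) ω := by
    filter_upwards [hpos, hr] with ω h1 h2
    rw [← h2]; exact h1
  have hq0pos : ∀ᵐ ω ∂μ, 0 < (μ[f0|mwx]) ω := by
    have htower : μ[μ[f0|m3]|mwx] =ᵐ[μ] μ[f0|mwx] := condExp_condExp_of_le hmwx_m3 hm3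
    have hpos' := my_condexp_pos_ae hmwx (integrable_condExp (m := m3)) hpos
    filter_upwards [htower, hpos'] with ω h1 h2
    rw [← h1]; exact h2
  -- μ B ≠ 0
  haveI : (ae μ).NeBot := ae_neBot.mpr (IsProbabilityMeasure.ne_zero μ)
  have hμB : μ B ≠ 0 := by
    intro h0
    have hf00 : f0 =ᵐ[μ] 0 := by
      have hnB : ∀ᵐ ω ∂μ, ω ∉ B := by
        rw [ae_iff]
        simpa [not_not, Set.setOf_mem_eq] using h0
      filter_upwards [hnB] with ω hω
      simp [hf0def, Set.indicator_of_notMem hω]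
    have hr0 : μ[f0|m3] =ᵐ[μ] 0 := by
      calc μ[f0|m3] =ᵐ[μ] μ[(0 : Ω → ℝ)|m3] := condExp_congr_ae hf00
        _ = 0 := condExp_zero
    have hFalse : ∀ᵐ ω ∂μ, False := by
      filter_upwards [hpos, hr0] with ω h1 h2
      rw [h2] at h1
      exact lt_irrefl 0 h1
    obtain ⟨ω, hω⟩ := hFalse.exists
    exact hω
  -- the conditional measure
  set ν := μ[|B] with hνdef
  have hν : ν = (μ B)⁻¹ • μ.restrict B := rfl
  haveI hνprob : IsProbabilityMeasure ν := cond_isProbabilityMeasure hμB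
  have hνac : ν ≪ μ := cond_absolutelyContinuous
  have haeν : ∀ {p : Ω → Prop}, (∀ᵐ ω ∂μ, p ω) → (∀ᵐ ω ∂ν, p ω) :=
    fun h => h.filter_mono hνac.ae_le
  have hIntν : ∀ {f : Ω → ℝ}, Integrable f μ → Integrable f ν := by
    intro f hf
    rw [hν]
    exact hf.integrableOn.smul_measure (ENNReal.inv_ne_top.mpr hμB)
  have hq0bdd := my_condexp_indicator_bdd (μ := μ) hmwx hB
  have hq1bdd := my_condexp_indicator_bdd (μ := μ) hmwx hB.compl
  have hf0bdd : ∀ᵐ x ∂μ, ‖f0 x‖ ≤ 1 := Filter.Eventually.of_forall fun x => by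
    by_cases hx : x ∈ B <;> simp [hf0def, Set.indicator_apply, hx]
  -- integrability of odds * f0
  have hIof0 : Integrable (fun ω => odds ω * f0 ω) μ := by
    have h := hoddsint.bdd_mul (c := 1) hint0.aestronglyMeasurable hf0bdd
    exact h.congr (Filter.Eventually.of_forall fun x => mul_comm _ _)
  -- step: E[odds * f0 | mwx] = E[f1 | mwx]
  have h5 : μ[(fun ω => odds ω * f0 ω)|mwx] =ᵐ[μ] μ[f1|mwx] := by
    have hsub : ∀ (m' : MeasurableSpace Ω), m' ≤ mΩ →
        μ[f1|m'] =ᵐ[μ] fun ω => 1 - (μ[f0|m']) ω := by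
      intro m' hm'
      have hsubf : f1 = (fun _ => (1:ℝ)) - f0 := by
        funext x
        by_cases hx : x ∈ B <;>
          simp [hf0def, hf1def, Set.indicator_apply, hx, Pi.sub_apply]
      have h2 : μ[(fun _ => (1:ℝ)) - f0|m'] =ᵐ[μ] μ[(fun _ => (1:ℝ))|m'] - μ[f0|m'] :=
        condExp_sub (integrable_const (1:ℝ)) hint0 m'
      rw [hsubf]
      refine h2.trans ?_
      rw [condExp_const hm']
      exact Filter.Eventually.of_forall fun ω => by simp [Pi.sub_apply]
    have hinner : μ[(fun ω => odds ω * f0 ω)|m3] =ᵐ[μ] μ[f1|m2] := by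
      have hpull : μ[(fun ω => odds ω * f0 ω)|m3] =ᵐ[μ] odds * μ[f0|m3] :=
        condExp_mul_of_stronglyMeasurable_left (hoddsm.mono hm2_m3) hIof0 hint0
      refine hpull.trans ?_
      filter_upwards [hr, hp0pos] with ω h2 h3
      rw [Pi.mul_apply, h2, hoddsdef]
      exact div_mul_cancel₀ _ (ne_of_gt h3)
    have hm2eqm3 : μ[f1|m2] =ᵐ[μ] μ[f1|m3] := by
      have ha := hsub m2 hm2
      have hb := hsub m3 hm3
      filter_upwards [ha, hb, hr] with ω h1 h2 h3
      rw [h1, h2, h3]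
    calc μ[(fun ω => odds ω * f0 ω)|mwx]
        =ᵐ[μ] μ[μ[(fun ω => odds ω * f0 ω)|m3]|mwx] :=
          (condExp_condExp_of_le hmwx_m3 hm3).symm
      _ =ᵐ[μ] μ[μ[f1|m2]|mwx] := condExp_congr_ae hinner
      _ =ᵐ[μ] μ[μ[f1|m3]|mwx] := condExp_congr_ae hm2eqm3
      _ =ᵐ[μ] μ[f1|mwx] := condExp_condExp_of_le hmwx_m3 hm3
  -- integrabilities over ν
  have hIoddsν : Integrable odds ν := hIntν hoddsint
  haveI : SigmaFinite (ν.trim hmwx) := by infer_instance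
  have hq0smν : AEStronglyMeasurable (μ[f0|mwx]) ν :=
    (stronglyMeasurable_condExp.mono hmwx).aestronglyMeasurable
  have hq0oddsν : Integrable (fun x => (μ[f0|mwx]) x * odds x) ν :=
    hIoddsν.bdd_mul (c := 1) hq0smν (haeν hq0bdd)
  have hGq0ν : Integrable (fun x => (ν[odds|mwx]) x * (μ[f0|mwx]) x) ν := by
    have h := (integrable_condExp (μ := ν) (m := mwx) (f := odds)).bdd_mul (c := 1)
      hq0smν (haeν hq0bdd)
    exact h.congr (Filter.Eventually.of_forall fun x => mul_comm _ _)
  have hq1ν : Integrable (μ[f1|mwx]) ν := hIntν integrable_condExp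
  -- set-integral computation under ν
  have hcondν : ∀ (h : Ω → ℝ) (s : Set Ω), MeasurableSet s →
      ∫ x in s, h x ∂ν = ((μ B)⁻¹).toReal * ∫ x in s, h x * f0 x ∂μ := by
    intro h s hs
    have e1 : ∫ x in s, h x * f0 x ∂μ = ∫ x in s, B.indicator h x ∂μ := by
      refine integral_congr_ae (Filter.Eventually.of_forall fun x => ?_)
      by_cases hx : x ∈ B <;> simp [hf0def, Set.indicator_apply, hx]
    rw [e1, setIntegral_indicator hB, hν, Measure.restrict_smul,
      Measure.restrict_restrict hs, integral_smul_measure, smul_eq_mul]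
  -- the key identity
  have key : (fun ω => (ν[odds|mwx]) ω * (μ[f0|mwx]) ω) =ᵐ[ν] μ[f1|mwx] := by
    refine ae_eq_of_forall_setIntegral_eq_of_sigmaFinite' hmwx
      (fun s _ _ => hGq0ν.integrableOn) (fun s _ _ => hq1ν.integrableOn)
      (fun s hs _ => ?_)
      ((stronglyMeasurable_condExp.mul stronglyMeasurable_condExp).aestronglyMeasurable)
      (stronglyMeasurable_condExp.aestronglyMeasurable)
    have hsΩ : MeasurableSet s := hmwx _ hs
    -- pull-out over ν
    have pullν : ν[(fun x => (μ[f0|mwx]) x * odds x)|mwx]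
        =ᵐ[ν] (μ[f0|mwx]) * ν[odds|mwx] :=
      condExp_mul_of_stronglyMeasurable_left stronglyMeasurable_condExp hq0oddsν hIoddsν
    -- pull-out over μ for q0 * (odds * f0)
    have hq0of0 : Integrable (fun x => (μ[f0|mwx]) x * (odds x * f0 x)) μ :=
      hIof0.bdd_mul (c := 1)
        (stronglyMeasurable_condExp.mono hmwx).aestronglyMeasurable hq0bdd
    have pull2 : μ[(fun x => (μ[f0|mwx]) x * (odds x * f0 x))|mwx]
        =ᵐ[μ] (μ[f0|mwx]) * μ[(fun ω => odds ω * f0 ω)|mwx] :=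
      condExp_mul_of_stronglyMeasurable_left stronglyMeasurable_condExp hq0of0 hIof0
    -- pull-out over μ for q1 * f0
    have hq1f0 : Integrable (fun x => (μ[f1|mwx]) x * f0 x) μ := by
      have h := hint0.bdd_mul (c := 1)
        (stronglyMeasurable_condExp.mono hmwx).aestronglyMeasurable hq1bdd
      exact h
    have pull3 : μ[(fun x => (μ[f1|mwx]) x * f0 x)|mwx]
        =ᵐ[μ] (μ[f1|mwx]) * μ[f0|mwx] :=
      condExp_mul_of_stronglyMeasurable_left stronglyMeasurable_condExp hq1f0 hint0
    calc ∫ x in s, (ν[odds|mwx]) x * (μ[f0|mwx]) x ∂ν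
        = ∫ x in s, (μ[f0|mwx]) x * (ν[odds|mwx]) x ∂ν := by
          refine integral_congr_ae (Filter.Eventually.of_forall fun x => mul_comm _ _)
      _ = ∫ x in s, (ν[(fun x => (μ[f0|mwx]) x * odds x)|mwx]) x ∂ν :=
          integral_congr_ae (ae_restrict_of_ae pullν.symm)
      _ = ∫ x in s, (μ[f0|mwx]) x * odds x ∂ν := setIntegral_condExp hmwx hq0oddsν hs
      _ = ((μ B)⁻¹).toReal * ∫ x in s, ((μ[f0|mwx]) x * odds x) * f0 x ∂μ :=
          hcondν _ s hsΩ
      _ = ((μ B)⁻¹).toReal * ∫ x in s, (μ[f0|mwx]) x * (odds x * f0 x) ∂μ := by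
          rw [integral_congr_ae (Filter.Eventually.of_forall fun x => mul_assoc _ _ _)]
      _ = ((μ B)⁻¹).toReal
            * ∫ x in s, (μ[(fun x => (μ[f0|mwx]) x * (odds x * f0 x))|mwx]) x ∂μ := by
          rw [setIntegral_condExp hmwx hq0of0 hs]
      _ = ((μ B)⁻¹).toReal * ∫ x in s, (μ[f0|mwx]) x * (μ[f1|mwx]) x ∂μ := by
          congr 1
          refine integral_congr_ae (ae_restrict_of_ae ?_)
          filter_upwards [pull2, h5] with x h1 h2
          rw [h1, Pi.mul_apply, h2]
      _ = ((μ B)⁻¹).toReal * ∫ x in s, (μ[f1|mwx]) x * (μ[f0|mwx]) x ∂μ := by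
          rw [integral_congr_ae (Filter.Eventually.of_forall fun x => mul_comm _ _)]
      _ = ((μ B)⁻¹).toReal
            * ∫ x in s, (μ[(fun x => (μ[f1|mwx]) x * f0 x)|mwx]) x ∂μ := by
          congr 1
          exact integral_congr_ae (ae_restrict_of_ae pull3.symm)
      _ = ((μ B)⁻¹).toReal * ∫ x in s, (μ[f1|mwx]) x * f0 x ∂μ := by
          rw [setIntegral_condExp hmwx hq1f0 hs]
      _ = ∫ x in s, (μ[f1|mwx]) x ∂ν := (hcondν _ s hsΩ).symm
  -- conclude
  filter_upwards [key, haeν hq0pos] with ω hk hq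
  show (μ[f1|mwx]) ω / (μ[f0|mwx]) ω = (ν[odds|mwx]) ω
  rw [div_eq_iff (ne_of_gt hq)]
  exact hk.symm

end MainAux


end MyAux

/-- `P(A=1|W,X) / P(A=0|W,X) = E[ P(A=1|U,X)/P(A=0|U,X) | W, A=0, X ]`
almost surely, where conditioning on the event `A = 0` is realized as conditional
expectation with respect to the conditional measure `μ[|{A = 0}]`. -/
theorem stmt1 {Ω : Type*} [MeasurableSpace Ω] [StandardBorelSpace Ω] [Nonempty Ω]
    (μ : Measure Ω) [IsProbabilityMeasure μ]
    (U W X A : Ω → ℝ)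
    (hU : Measurable U) (hW : Measurable W) (hX : Measurable X) (hA : Measurable A)
    (hAbin : ∀ ω, A ω = 0 ∨ A ω = 1)
    -- W ⊥ A | (U, X)
    (hWA : CondIndepFun (MeasurableSpace.comap (fun ω => (U ω, X ω)) inferInstance)
      ((hU.prodMk hX).comap_le) W A μ)
    -- positivity: 0 < P(A=0 | U,W,X) < 1 a.s.
    (hpos : ∀ᵐ ω ∂μ,
      0 < (μ[(fun ω' => if A ω' = 0 then (1:ℝ) else 0) |
            MeasurableSpace.comap (fun ω' => (U ω', W ω', X ω')) inferInstance]) ω ∧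
      (μ[(fun ω' => if A ω' = 0 then (1:ℝ) else 0) |
            MeasurableSpace.comap (fun ω' => (U ω', W ω', X ω')) inferInstance]) ω < 1)
    -- the conditional odds P(A=1|U,X)/P(A=0|U,X) are integrable
    (hoddsint : Integrable (fun ω =>
      (μ[(fun ω' => if A ω' = 1 then (1:ℝ) else 0) |
          MeasurableSpace.comap (fun ω' => (U ω', X ω')) inferInstance]) ω /
      (μ[(fun ω' => if A ω' = 0 then (1:ℝ) else 0) |
          MeasurableSpace.comap (fun ω' => (U ω', X ω')) inferInstance]) ω) μ) :
    (fun ω =>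
      (μ[(fun ω' => if A ω' = 1 then (1:ℝ) else 0) |
          MeasurableSpace.comap (fun ω' => (W ω', X ω')) inferInstance]) ω /
      (μ[(fun ω' => if A ω' = 0 then (1:ℝ) else 0) |
          MeasurableSpace.comap (fun ω' => (W ω', X ω')) inferInstance]) ω)
      =ᵐ[μ[|{ω | A ω = 0}]]
    (μ[|{ω | A ω = 0}])[(fun ω =>
      (μ[(fun ω' => if A ω' = 1 then (1:ℝ) else 0) |
          MeasurableSpace.comap (fun ω' => (U ω', X ω')) inferInstance]) ω /
      (μ[(fun ω' => if A ω' = 0 then (1:ℝ) else 0) |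
          MeasurableSpace.comap (fun ω' => (U ω', X ω')) inferInstance]) ω) |
      MeasurableSpace.comap (fun ω => (W ω, X ω)) inferInstance] := by

  classical
  have hB : MeasurableSet {ω | A ω = 0} := hA (measurableSet_singleton 0)
  have hif0 : (fun ω' => if A ω' = 0 then (1:ℝ) else 0)
      = Set.indicator {ω | A ω = 0} (fun _ => (1:ℝ)) := by
    funext ω
    by_cases h : A ω = 0 <;> simp [Set.indicator_apply, h]
  have hif1 : (fun ω' => if A ω' = 1 then (1:ℝ) else 0)
      = Set.indicator ({ω | A ω = 0}ᶜ) (fun _ => (1:ℝ)) := by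
    funext ω
    rcases hAbin ω with h | h <;> simp [Set.indicator_apply, h]
  simp only [hif0, hif1] at hpos hoddsint ⊢
  -- σ-algebra bookkeeping
  have hcomap3 : MeasurableSpace.comap (fun ω => (U ω, W ω, X ω)) inferInstance
      = MeasurableSpace.comap (fun ω => (U ω, X ω)) inferInstance
        ⊔ MeasurableSpace.comap W inferInstance := by
    rw [my_comap_pair U (fun ω => (W ω, X ω)), my_comap_pair W X, my_comap_pair U X]
    refine le_antisymm
      (sup_le (le_sup_of_le_left le_sup_left)
        (sup_le le_sup_right (le_sup_of_le_left le_sup_right)))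
      (sup_le (sup_le le_sup_left (le_sup_of_le_right le_sup_right))
        (le_sup_of_le_right le_sup_left))
  have hm2 : MeasurableSpace.comap (fun ω => (U ω, X ω)) inferInstance ≤ _ :=
    (hU.prodMk hX).comap_le
  have hmwx : MeasurableSpace.comap (fun ω => (W ω, X ω)) inferInstance ≤ _ :=
    (hW.prodMk hX).comap_le
  have hm3 : MeasurableSpace.comap (fun ω => (U ω, W ω, X ω)) inferInstance ≤ _ :=
    (hU.prodMk (hW.prodMk hX)).comap_le
  have hm2_m3 : MeasurableSpace.comap (fun ω => (U ω, X ω)) inferInstance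
      ≤ MeasurableSpace.comap (fun ω => (U ω, W ω, X ω)) inferInstance := by
    rw [hcomap3]; exact le_sup_left
  have hmwx_m3 : MeasurableSpace.comap (fun ω => (W ω, X ω)) inferInstance
      ≤ MeasurableSpace.comap (fun ω => (U ω, W ω, X ω)) inferInstance := by
    rw [hcomap3, my_comap_pair W X, my_comap_pair U X]
    exact sup_le le_sup_right (le_sup_of_le_left le_sup_right)
  -- conditional independence
  have hInd := (condIndepFun_iff _ ((hU.prodMk hX).comap_le) W A hW hA μ).mp hWA
  have hBA : MeasurableSet[MeasurableSpace.comap A inferInstance] {ω | A ω = 0} :=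
    ⟨{0}, measurableSet_singleton 0, rfl⟩
  have hr : μ[Set.indicator {ω | A ω = 0} (fun _ => (1:ℝ)) |
        MeasurableSpace.comap (fun ω => (U ω, W ω, X ω)) inferInstance]
      =ᵐ[μ] μ[Set.indicator {ω | A ω = 0} (fun _ => (1:ℝ)) |
        MeasurableSpace.comap (fun ω => (U ω, X ω)) inferInstance] := by
    rw [hcomap3]
    exact my_condexp_indicator_sup hm2 hW.comap_le hB
      (fun t ht => hInd t {ω | A ω = 0} ht hBA)
  exact my_main hm2 hmwx hm3 hm2_m3 hmwx_m3 hB hr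
    (hpos.mono fun ω h => h.1) hoddsint
end

section
/- Let $A\in\{0,1\}$ with $0<\mathbb{P}(A=1\mid U,M,X)<1$ a.s., and suppose: (a) $\mathbb{E}[Y\mid U,A,M,X]=\mathbb{E}[h_1(W,M,A,X)\mid U,A,M,X]$ a.s. with $W\perp(Z,A)\mid(U,M,X)$ and $Z\perp(Y,W)\mid(U,A,M,X)$; (b) $\mathbb{E}[q_0(Z,X)\mid U,A=0,M,X]\cdot\frac{\mathbb{P}(A=0\mid U,M,X)}{\mathbb{P}(A=1\mid U,M,X)}=\mathbb{E}[q_1(Z,M,X)\mid U,A=1,M,X]$ a.s. Then $\mathbb{E}\big[\mathbf{1}(A=1)\,\mathbb{E}[q_0(Z,X)\mid U,A=0,M,X]\cdot\frac{\mathbb{P}(A=0\mid U,M,X)}{\mathbb{P}(A=1\mid U,M,X)}\, Y\big] = \mathbb{E}\big[\mathbf{1}(A=1)\,Y\,q_1(Z,M,X)\big]$. -/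
open MeasureTheory ProbabilityTheory


section Stmt6Aux
open MeasurableSpace Set



/-- An `𝔪`-measurable real function is a.e. constant under the conditional expectation kernel. -/
lemma stmt6_aux_kernel_const {Ω : Type*} {𝔪 : MeasurableSpace Ω} {mΩ : MeasurableSpace Ω}
    [StandardBorelSpace Ω] [Nonempty Ω] (μ : Measure Ω) [IsProbabilityMeasure μ]
    (h𝔪 : 𝔪 ≤ mΩ) {f : Ω → ℝ} (hf : Measurable[𝔪] f) :
    ∀ᵐ ω ∂μ, ∀ᵐ ω' ∂(condExpKernel μ 𝔪 ω), f ω' = f ω := by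
  have key : ∀ q : ℚ, ∀ᵐ ω ∂μ,
      (condExpKernel μ 𝔪 ω (f ⁻¹' Iio (q:ℝ))).toReal
        = (f ⁻¹' Iio (q:ℝ)).indicator (fun _ => (1:ℝ)) ω := by
    intro q
    have ht𝔪 : MeasurableSet[𝔪] (f ⁻¹' Iio (q:ℝ)) := hf measurableSet_Iio
    have ht : MeasurableSet (f ⁻¹' Iio (q:ℝ)) := h𝔪 _ ht𝔪
    have h1 := condExpKernel_ae_eq_condExp (μ := μ) h𝔪 ht
    have h2 : μ[(f ⁻¹' Iio (q:ℝ)).indicator (fun _ => (1:ℝ)) | 𝔪]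
        = (f ⁻¹' Iio (q:ℝ)).indicator (fun _ => (1:ℝ)) :=
      condExp_of_stronglyMeasurable h𝔪
        (stronglyMeasurable_const.indicator ht𝔪)
        ((integrable_const (1:ℝ)).indicator ht)
    filter_upwards [h1] with ω hω
    change ((condExpKernel μ 𝔪) ω).real (f ⁻¹' Iio (q:ℝ)) = _
    rw [hω, h2]
  rw [← ae_all_iff] at key
  filter_upwards [key] with ω hω
  have hiff : ∀ q : ℚ, ∀ᵐ ω' ∂(condExpKernel μ 𝔪 ω), (f ω' < (q:ℝ) ↔ f ω < (q:ℝ)) := by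
    intro q
    have ht𝔪 : MeasurableSet[𝔪] (f ⁻¹' Iio (q:ℝ)) := hf measurableSet_Iio
    have ht : MeasurableSet (f ⁻¹' Iio (q:ℝ)) := h𝔪 _ ht𝔪
    by_cases hmem : f ω < (q:ℝ)
    · have h1 : (condExpKernel μ 𝔪 ω (f ⁻¹' Iio (q:ℝ))).toReal = 1 := by
        rw [hω q, indicator_of_mem (by exact hmem)]
      have h1' : condExpKernel μ 𝔪 ω (f ⁻¹' Iio (q:ℝ)) = 1 := by
        rwa [ENNReal.toReal_eq_one_iff] at h1
      have hc : condExpKernel μ 𝔪 ω (f ⁻¹' Iio (q:ℝ))ᶜ = 0 := by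
        rw [measure_compl ht (measure_ne_top _ _), h1', measure_univ, tsub_self]
      have : ∀ᵐ ω' ∂(condExpKernel μ 𝔪 ω), ω' ∈ f ⁻¹' Iio (q:ℝ) := by
        rw [ae_iff]
        exact hc
      filter_upwards [this] with ω' h'
      exact ⟨fun _ => hmem, fun _ => h'⟩
    · have h1 : (condExpKernel μ 𝔪 ω (f ⁻¹' Iio (q:ℝ))).toReal = 0 := by
        rw [hω q, indicator_of_notMem (by exact hmem)]
      have h1' : condExpKernel μ 𝔪 ω (f ⁻¹' Iio (q:ℝ)) = 0 := by
        rw [ENNReal.toReal_eq_zero_iff] at h1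
        exact h1.resolve_right (measure_ne_top _ _)
      have : ∀ᵐ ω' ∂(condExpKernel μ 𝔪 ω), ω' ∉ f ⁻¹' Iio (q:ℝ) :=
        measure_eq_zero_iff_ae_notMem.mp h1'
      filter_upwards [this] with ω' h'
      exact ⟨fun h'' => absurd h'' h', fun h'' => absurd h'' hmem⟩
  rw [← ae_all_iff] at hiff
  filter_upwards [hiff] with ω' h'
  by_contra hne
  rcases lt_or_gt_of_ne hne with hlt | hlt
  · obtain ⟨q, hq1, hq2⟩ := exists_rat_btwn hlt
    exact absurd ((h' q).mp hq1) (not_lt.mpr hq2.le)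
  · obtain ⟨q, hq1, hq2⟩ := exists_rat_btwn hlt
    exact absurd ((h' q).mpr hq1) (not_lt.mpr hq2.le)

lemma stmt6_aux_kernel_indep {Ω : Type*} {𝔪 : MeasurableSpace Ω} {mΩ : MeasurableSpace Ω}
    [StandardBorelSpace Ω] [Nonempty Ω] (μ : Measure Ω) [IsProbabilityMeasure μ]
    (h𝔪 : 𝔪 ≤ mΩ) {Z Y : Ω → ℝ} (hZ : Measurable Z) (hY : Measurable Y)
    (h : ProbabilityTheory.Kernel.IndepFun Z Y (condExpKernel μ 𝔪) (μ.trim h𝔪)) :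
    ∀ᵐ ω ∂μ, IndepFun Z Y (condExpKernel μ 𝔪 ω) := by
  rw [Kernel.indepFun_iff_measure_inter_preimage_eq_mul] at h
  have key : ∀ᵐ ω ∂μ, ∀ q r : ℚ,
      condExpKernel μ 𝔪 ω (Z ⁻¹' Iio (q:ℝ) ∩ Y ⁻¹' Iio (r:ℝ))
        = condExpKernel μ 𝔪 ω (Z ⁻¹' Iio (q:ℝ)) * condExpKernel μ 𝔪 ω (Y ⁻¹' Iio (r:ℝ)) := by
    refine ae_all_iff.mpr fun q => ae_all_iff.mpr fun r => ?_
    exact ae_of_ae_trim h𝔪 (h _ _ measurableSet_Iio measurableSet_Iio)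
  filter_upwards [key] with ω hω
  haveI : IsProbabilityMeasure (condExpKernel μ 𝔪 ω) := inferInstance
  have hgen : ∀ f : Ω → ℝ, Measurable f → MeasurableSpace.comap f inferInstance
      = MeasurableSpace.generateFrom (Set.range (fun q : ℚ => f ⁻¹' Iio (q:ℝ))) := by
    intro f hf
    conv_lhs => rw [show (inferInstance : MeasurableSpace ℝ) = borel ℝ from rfl,
      Real.borel_eq_generateFrom_Iio_rat]
    rw [MeasurableSpace.comap_generateFrom]
    congr 1
    rw [Set.image_iUnion]
    simp_rw [Set.image_singleton]
    rw [Set.iUnion_singleton_eq_range]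
  have hpi : ∀ f : Ω → ℝ, IsPiSystem (Set.range (fun q : ℚ => f ⁻¹' Iio (q:ℝ))) := by
    rintro f _ ⟨q, rfl⟩ _ ⟨r, rfl⟩ -
    exact ⟨min q r, by rw [← Set.preimage_inter, Iio_inter_Iio, ← Rat.cast_min]⟩
  have hindep : Indep (MeasurableSpace.comap Z inferInstance)
      (MeasurableSpace.comap Y inferInstance) (condExpKernel μ 𝔪 ω) := by
    refine IndepSets.indep hZ.comap_le hY.comap_le (hpi Z) (hpi Y) (hgen Z hZ) (hgen Y hY) ?_
    rintro _ _ ⟨q, rfl⟩ ⟨r, rfl⟩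
    exact Filter.Eventually.of_forall fun _ => hω q r
  exact hindep
lemma stmt6_aux_main {Ω : Type*} {m 𝔪 : MeasurableSpace Ω} {mΩ : MeasurableSpace Ω}
    [StandardBorelSpace Ω] [Nonempty Ω] (μ : Measure Ω) [IsProbabilityMeasure μ]
    (hm𝔪 : m ≤ 𝔪) (h𝔪 : 𝔪 ≤ mΩ)
    {s : Set Ω} (hs𝔪 : MeasurableSet[𝔪] s)
    (htrace : ∀ t, MeasurableSet[𝔪] t → ∃ t', MeasurableSet[m] t' ∧ t ∩ s = t' ∩ s)
    {Z Y G φ : Ω → ℝ} (hZ : Measurable Z) (hY : Measurable Y)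
    (hYint : Integrable Y μ) (hGint : Integrable G μ)
    (hGconst : ∀ᵐ ω ∂μ, ∃ g : ℝ → ℝ, Measurable g ∧
        (∀ᵐ ω' ∂(condExpKernel μ 𝔪 ω), s.indicator G ω' = g (Z ω')))
    (hZY : Kernel.IndepFun Z Y (condExpKernel μ 𝔪) (μ.trim h𝔪))
    (hφ : φ =ᵐ[μ[|s]] (μ[|s])[G | m])
    (hint1 : Integrable (fun ω => s.indicator φ ω * Y ω) μ)
    (hint2 : Integrable (fun ω => s.indicator G ω * Y ω) μ) :
    ∫ ω, s.indicator φ ω * Y ω ∂μ = ∫ ω, s.indicator G ω * Y ω ∂μ := by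
  by_cases hμs : μ s = 0
  · have h0 : ∀ᵐ ω ∂μ, ω ∉ s := measure_eq_zero_iff_ae_notMem.mp hμs
    have e1 : (fun ω => s.indicator φ ω * Y ω) =ᵐ[μ] fun _ => (0:ℝ) := by
      filter_upwards [h0] with ω h; rw [indicator_of_notMem h, zero_mul]
    have e2 : (fun ω => s.indicator G ω * Y ω) =ᵐ[μ] fun _ => (0:ℝ) := by
      filter_upwards [h0] with ω h; rw [indicator_of_notMem h, zero_mul]
    rw [integral_congr_ae e1, integral_congr_ae e2]
  · haveI : IsProbabilityMeasure (μ[|s]) := cond_isProbabilityMeasure hμs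
    have hs : MeasurableSet s := h𝔪 _ hs𝔪
    have hμs' : μ s ≠ ⊤ := measure_ne_top μ s
    have hconddef : μ[|s] = (μ s)⁻¹ • μ.restrict s := rfl
    have hrs : (μ s) • μ[|s] = μ.restrict s := by
      rw [hconddef, smul_smul, ENNReal.mul_inv_cancel hμs hμs', one_smul]
    set ψ : Ω → ℝ := (μ[|s])[G | m] with hψdef
    have hφ' : φ =ᵐ[μ.restrict s] ψ := by
      have hc : (μ s)⁻¹ ≠ 0 := ENNReal.inv_ne_zero.mpr hμs'
      rw [hconddef] at hφ
      exact (Measure.ae_ennreal_smul_measure_iff hc).mp hφ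
    have hae : s.indicator φ =ᵐ[μ] s.indicator ψ := by
      have h' := (ae_restrict_iff' hs).mp hφ'
      filter_upwards [h'] with ω h
      by_cases hmem : ω ∈ s
      · rw [indicator_of_mem hmem, indicator_of_mem hmem, h hmem]
      · rw [indicator_of_notMem hmem, indicator_of_notMem hmem]
    have haeY : (fun ω => s.indicator φ ω * Y ω) =ᵐ[μ] fun ω => s.indicator ψ ω * Y ω := by
      filter_upwards [hae] with ω h; rw [h]
    have hψYint : Integrable (fun ω => s.indicator ψ ω * Y ω) μ := hint1.congr haeY
    have hψint_cond : Integrable ψ (μ[|s]) := integrable_condExp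
    have hψres : Integrable ψ (μ.restrict s) := by
      rw [← hrs]; exact hψint_cond.smul_measure hμs'
    have hψind : Integrable (s.indicator ψ) μ := (integrable_indicator_iff hs).mpr hψres
    have hGcond : Integrable G (μ[|s]) := by
      rw [hconddef]
      exact (hGint.restrict).smul_measure (ENNReal.inv_ne_top.mpr hμs)
    have hGind : Integrable (s.indicator G) μ := (integrable_indicator_iff hs).mpr hGint.restrict
    have hFm : StronglyMeasurable[𝔪] (s.indicator ψ) :=
      (stronglyMeasurable_condExp.mono hm𝔪).indicator hs𝔪
    -- trace identity
    have htr : s.indicator ψ =ᵐ[μ] μ[s.indicator G | 𝔪] := by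
      refine ae_eq_condExp_of_forall_setIntegral_eq h𝔪 hGind
        (fun t _ _ => hψind.integrableOn) ?_ hFm.aestronglyMeasurable
      intro t ht _
      obtain ⟨t', ht', hts⟩ := htrace t ht
      have hmt' : MeasurableSet t' := (hm𝔪.trans h𝔪) _ ht'
      have key : ∀ h : Ω → ℝ,
          ∫ x in t, s.indicator h x ∂μ = (μ s).toReal • ∫ x in t', h x ∂(μ[|s]) := by
        intro h
        calc ∫ x in t, s.indicator h x ∂μ = ∫ x in t ∩ s, h x ∂μ := setIntegral_indicator hs
          _ = ∫ x in t' ∩ s, h x ∂μ := by rw [hts]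
          _ = ∫ x in t', h x ∂(μ.restrict s) := by rw [Measure.restrict_restrict hmt']
          _ = ∫ x in t', h x ∂((μ s) • μ[|s]) := by rw [hrs]
          _ = (μ s).toReal • ∫ x in t', h x ∂(μ[|s]) := by
              rw [Measure.restrict_smul, integral_smul_measure]
      rw [key ψ, key G, setIntegral_condExp (hm𝔪.trans h𝔪) hGcond ht']
    -- pull-out property
    have hmul : μ[(fun ω => s.indicator ψ ω * Y ω) | 𝔪]
        =ᵐ[μ] fun ω => s.indicator ψ ω * (μ[Y|𝔪]) ω := by
      have := condExp_mul_of_stronglyMeasurable_left (μ := μ) hFm (by exact hψYint) hYint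
      exact this
    -- factorization via the kernel
    have h4 := stmt6_aux_kernel_indep μ h𝔪 hZ hY hZY
    have h1 := condExp_ae_eq_integral_condExpKernel h𝔪 hint2
    have h2 := condExp_ae_eq_integral_condExpKernel h𝔪 hGind
    have h3 := condExp_ae_eq_integral_condExpKernel h𝔪 hYint
    have hfact : μ[(fun ω => s.indicator G ω * Y ω) | 𝔪] =ᵐ[μ]
        fun ω => (μ[s.indicator G|𝔪]) ω * (μ[Y|𝔪]) ω := by
      filter_upwards [h1, h2, h3, h4, hGconst] with ω e1 e2 e3 hind hg
      obtain ⟨g, hgmeas, hgae⟩ := hg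
      rw [e1, e2, e3]
      have hIg : IndepFun (g ∘ Z) Y (condExpKernel μ 𝔪 ω) := hind.comp hgmeas measurable_id
      have c1 : ∫ ω', s.indicator G ω' * Y ω' ∂(condExpKernel μ 𝔪 ω)
          = ∫ ω', g (Z ω') * Y ω' ∂(condExpKernel μ 𝔪 ω) :=
        integral_congr_ae (by filter_upwards [hgae] with ω' h'; rw [h'])
      have c2 : ∫ ω', s.indicator G ω' ∂(condExpKernel μ 𝔪 ω)
          = ∫ ω', g (Z ω') ∂(condExpKernel μ 𝔪 ω) :=
        integral_congr_ae (by filter_upwards [hgae] with ω' h'; rw [h'])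
      rw [c1, c2]
      exact hIg.integral_fun_mul_eq_mul_integral ((hgmeas.comp hZ).aestronglyMeasurable) hY.aestronglyMeasurable
    calc ∫ ω, s.indicator φ ω * Y ω ∂μ
        = ∫ ω, s.indicator ψ ω * Y ω ∂μ := integral_congr_ae haeY
      _ = ∫ ω, (μ[(fun ω' => s.indicator ψ ω' * Y ω')|𝔪]) ω ∂μ := (integral_condExp h𝔪).symm
      _ = ∫ ω, s.indicator ψ ω * (μ[Y|𝔪]) ω ∂μ := integral_congr_ae hmul
      _ = ∫ ω, (μ[s.indicator G|𝔪]) ω * (μ[Y|𝔪]) ω ∂μ :=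
          integral_congr_ae (by filter_upwards [htr] with ω h; rw [h])
      _ = ∫ ω, (μ[(fun ω' => s.indicator G ω' * Y ω')|𝔪]) ω ∂μ :=
          (integral_congr_ae hfact).symm
      _ = ∫ ω, s.indicator G ω * Y ω ∂μ := integral_condExp h𝔪
lemma stmt6_aux_main2 {Ω : Type*} {m 𝔪 : MeasurableSpace Ω} {mΩ : MeasurableSpace Ω}
    [StandardBorelSpace Ω] [Nonempty Ω] (μ : Measure Ω) [IsProbabilityMeasure μ]
    (hm𝔪 : m ≤ 𝔪) (h𝔪 : 𝔪 ≤ mΩ)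
    {A M X : Ω → ℝ} (hA𝔪 : Measurable[𝔪] A) (hM𝔪 : Measurable[𝔪] M) (hX𝔪 : Measurable[𝔪] X)
    {s : Set Ω} (hsdef : s = {ω | A ω = 1}) (hs𝔪 : MeasurableSet[𝔪] s)
    (htrace : ∀ t, MeasurableSet[𝔪] t → ∃ t', MeasurableSet[m] t' ∧ t ∩ s = t' ∩ s)
    {Z Y W φ : Ω → ℝ} (hZ : Measurable Z) (hY : Measurable Y) (hYint : Integrable Y μ)
    (q1 : ℝ × ℝ × ℝ → ℝ) (hq1 : Measurable q1)
    (hq1int : Integrable (fun ω => q1 (Z ω, M ω, X ω)) μ)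
    (hZYW : CondIndepFun 𝔪 h𝔪 Z (fun ω => (Y ω, W ω)) μ)
    (hφ : φ =ᵐ[μ[|s]] (μ[|s])[(fun ω => q1 (Z ω, M ω, X ω)) | m])
    (hint1 : Integrable (fun ω => s.indicator φ ω * Y ω) μ)
    (hint2 : Integrable (fun ω => s.indicator (fun ω' => q1 (Z ω', M ω', X ω')) ω * Y ω) μ) :
    ∫ ω, s.indicator φ ω * Y ω ∂μ
      = ∫ ω, s.indicator (fun ω' => q1 (Z ω', M ω', X ω')) ω * Y ω ∂μ := by
  have hcA := stmt6_aux_kernel_const μ h𝔪 hA𝔪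
  have hcM := stmt6_aux_kernel_const μ h𝔪 hM𝔪
  have hcX := stmt6_aux_kernel_const μ h𝔪 hX𝔪
  have hGconst : ∀ᵐ ω ∂μ, ∃ g : ℝ → ℝ, Measurable g ∧
      (∀ᵐ ω' ∂(condExpKernel μ 𝔪 ω),
        s.indicator (fun ω'' => q1 (Z ω'', M ω'', X ω'')) ω' = g (Z ω')) := by
    filter_upwards [hcA, hcM, hcX] with ω eA eM eX
    refine ⟨fun z => (if A ω = 1 then (1:ℝ) else 0) * q1 (z, M ω, X ω),
      measurable_const.mul (hq1.comp (measurable_id.prodMk measurable_const)), ?_⟩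
    filter_upwards [eA, eM, eX] with ω' hA' hM' hX'
    by_cases hmem : A ω = 1
    · have hmem' : ω' ∈ s := by rw [hsdef]; show A ω' = 1; rw [hA', hmem]
      rw [Set.indicator_of_mem hmem', if_pos hmem, one_mul, hM', hX']
    · have hmem' : ω' ∉ s := by
        rw [hsdef]; exact fun hc => hmem (by rw [← hA']; exact hc)
      rw [Set.indicator_of_notMem hmem', if_neg hmem, zero_mul]
  have hZY : Kernel.IndepFun Z Y (condExpKernel μ 𝔪) (μ.trim h𝔪) := by
    have := Kernel.IndepFun.comp hZYW measurable_id
      (measurable_fst : Measurable (Prod.fst : ℝ × ℝ → ℝ))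
    exact this
  exact stmt6_aux_main μ hm𝔪 h𝔪 hs𝔪 htrace hZ hY hYint hq1int hGconst hZY hφ hint1 hint2

end Stmt6Aux

set_option linter.unusedVariables false in
/-- under the outcome-bridge equation given `(U,A,M,X)`, the proxy
conditional independencies, and the latent exposure-bridge equation (b),
`E[1(A=1) E[q₀(Z,X)|U,A=0,M,X] · (P(A=0|U,M,X)/P(A=1|U,M,X)) Y] = E[1(A=1) Y q₁(Z,M,X)]`. -/
theorem stmt6 {Ω : Type*} [MeasurableSpace Ω] [StandardBorelSpace Ω] [Nonempty Ω]
    (μ : Measure Ω) [IsProbabilityMeasure μ]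
    (A U Y Z W M X : Ω → ℝ)
    (hA : Measurable A) (hU : Measurable U) (hY : Measurable Y) (hZ : Measurable Z)
    (hW : Measurable W) (hM : Measurable M) (hX : Measurable X)
    (hAbin : ∀ ω, A ω = 0 ∨ A ω = 1)
    (hYint : Integrable Y μ)
    (h1 : ℝ × ℝ × ℝ × ℝ → ℝ) (h1meas : Measurable h1)
    (h1int : Integrable (fun ω => h1 (W ω, M ω, A ω, X ω)) μ)
    (q0 : ℝ × ℝ → ℝ) (hq0 : Measurable q0)
    (hq0int : Integrable (fun ω => q0 (Z ω, X ω)) μ)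
    (q1 : ℝ × ℝ × ℝ → ℝ) (hq1 : Measurable q1)
    (hq1int : Integrable (fun ω => q1 (Z ω, M ω, X ω)) μ)
    -- positivity: 0 < P(A=1 | U,M,X) < 1 a.s.
    (hpos : ∀ᵐ ω ∂μ,
      0 < (μ[(fun ω' => if A ω' = 1 then (1:ℝ) else 0) |
            MeasurableSpace.comap (fun ω' => (U ω', M ω', X ω')) inferInstance]) ω ∧
      (μ[(fun ω' => if A ω' = 1 then (1:ℝ) else 0) |
            MeasurableSpace.comap (fun ω' => (U ω', M ω', X ω')) inferInstance]) ω < 1)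
    -- (a) E[Y | U,A,M,X] = E[h₁(W,M,A,X) | U,A,M,X] a.s.
    (ha : μ[Y | MeasurableSpace.comap (fun ω => (U ω, A ω, M ω, X ω)) inferInstance]
        =ᵐ[μ]
      μ[(fun ω => h1 (W ω, M ω, A ω, X ω)) |
        MeasurableSpace.comap (fun ω => (U ω, A ω, M ω, X ω)) inferInstance])
    -- W ⊥ (Z,A) | (U,M,X)
    (hWZA : CondIndepFun
      (MeasurableSpace.comap (fun ω => (U ω, M ω, X ω)) inferInstance)
      ((hU.prodMk (hM.prodMk hX)).comap_le) W (fun ω => (Z ω, A ω)) μ)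
    -- Z ⊥ (Y,W) | (U,A,M,X)
    (hZYW : CondIndepFun
      (MeasurableSpace.comap (fun ω => (U ω, A ω, M ω, X ω)) inferInstance)
      ((hU.prodMk (hA.prodMk (hM.prodMk hX))).comap_le) Z (fun ω => (Y ω, W ω)) μ)
    -- (b) E[q₀(Z,X) | U,A=0,M,X] · P(A=0|U,M,X)/P(A=1|U,M,X) = E[q₁(Z,M,X) | U,A=1,M,X] a.s.
    (hb : (fun ω =>
        ((μ[|{ω' | A ω' = 0}])[(fun ω' => q0 (Z ω', X ω')) |
            MeasurableSpace.comap (fun ω' => (U ω', M ω', X ω')) inferInstance]) ω *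
        ((μ[(fun ω' => if A ω' = 0 then (1:ℝ) else 0) |
            MeasurableSpace.comap (fun ω' => (U ω', M ω', X ω')) inferInstance]) ω /
         (μ[(fun ω' => if A ω' = 1 then (1:ℝ) else 0) |
            MeasurableSpace.comap (fun ω' => (U ω', M ω', X ω')) inferInstance]) ω))
        =ᵐ[μ[|{ω | A ω = 1}]]
      (μ[|{ω | A ω = 1}])[(fun ω => q1 (Z ω, M ω, X ω)) |
        MeasurableSpace.comap (fun ω => (U ω, M ω, X ω)) inferInstance])
    -- integrability of the two integrands
    (hint1 : Integrable (fun ω => (if A ω = 1 then (1:ℝ) else 0) *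
        (((μ[|{ω' | A ω' = 0}])[(fun ω' => q0 (Z ω', X ω')) |
            MeasurableSpace.comap (fun ω' => (U ω', M ω', X ω')) inferInstance]) ω *
        ((μ[(fun ω' => if A ω' = 0 then (1:ℝ) else 0) |
            MeasurableSpace.comap (fun ω' => (U ω', M ω', X ω')) inferInstance]) ω /
         (μ[(fun ω' => if A ω' = 1 then (1:ℝ) else 0) |
            MeasurableSpace.comap (fun ω' => (U ω', M ω', X ω')) inferInstance]) ω)) *
        Y ω) μ)
    (hint2 : Integrable (fun ω => (if A ω = 1 then (1:ℝ) else 0) * Y ω *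
        q1 (Z ω, M ω, X ω)) μ) :
    ∫ ω, (if A ω = 1 then (1:ℝ) else 0) *
        (((μ[|{ω' | A ω' = 0}])[(fun ω' => q0 (Z ω', X ω')) |
            MeasurableSpace.comap (fun ω' => (U ω', M ω', X ω')) inferInstance]) ω *
        ((μ[(fun ω' => if A ω' = 0 then (1:ℝ) else 0) |
            MeasurableSpace.comap (fun ω' => (U ω', M ω', X ω')) inferInstance]) ω /
         (μ[(fun ω' => if A ω' = 1 then (1:ℝ) else 0) |
            MeasurableSpace.comap (fun ω' => (U ω', M ω', X ω')) inferInstance]) ω)) *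
        Y ω ∂μ
      = ∫ ω, (if A ω = 1 then (1:ℝ) else 0) * Y ω * q1 (Z ω, M ω, X ω) ∂μ := by
  classical
  -- abbreviations
  set mm : MeasurableSpace Ω :=
    MeasurableSpace.comap (fun ω => (U ω, M ω, X ω)) inferInstance with hmmdef
  set MM : MeasurableSpace Ω :=
    MeasurableSpace.comap (fun ω => (U ω, A ω, M ω, X ω)) inferInstance with hMMdef
  have hMMle : MM ≤ _ := (hU.prodMk (hA.prodMk (hM.prodMk hX))).comap_le
  have hmmMM : mm ≤ MM := by
    have hcomp : (fun ω => (U ω, M ω, X ω))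
        = (fun p : ℝ × ℝ × ℝ × ℝ => (p.1, p.2.2)) ∘ (fun ω => (U ω, A ω, M ω, X ω)) := rfl
    rw [hmmdef, hcomp, ← MeasurableSpace.comap_comp]
    exact MeasurableSpace.comap_mono
      ((measurable_fst.prodMk (measurable_snd.comp measurable_snd)).comap_le)
  set s : Set Ω := {ω | A ω = 1} with hsdef
  have hs𝔪 : MeasurableSet[MM] s :=
    ⟨{p : ℝ × ℝ × ℝ × ℝ | p.2.1 = 1},
      (measurable_fst.comp measurable_snd) (measurableSet_singleton (1:ℝ)), rfl⟩
  have htrace : ∀ t, MeasurableSet[MM] t → ∃ t', MeasurableSet[mm] t' ∧ t ∩ s = t' ∩ s := by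
    rintro t ⟨B, hB, rfl⟩
    refine ⟨(fun ω => (U ω, M ω, X ω)) ⁻¹'
        ((fun p : ℝ × ℝ × ℝ => (p.1, (1:ℝ), p.2)) ⁻¹' B),
      ⟨_, (measurable_fst.prodMk (measurable_const.prodMk measurable_snd)) hB, rfl⟩, ?_⟩
    ext ω
    by_cases hA1 : A ω = 1
    · simp [Set.mem_preimage, hsdef, hA1]
    · simp [Set.mem_preimage, hsdef, hA1]
  -- measurability with respect to MM
  have hVMM : Measurable[MM] (fun ω => (U ω, A ω, M ω, X ω)) :=
    Measurable.of_comap_le le_rfl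
  have hAMM : Measurable[MM] A := (measurable_fst.comp measurable_snd).comp hVMM
  have hMMM : Measurable[MM] M :=
    (measurable_fst.comp (measurable_snd.comp measurable_snd)).comp hVMM
  have hXMM : Measurable[MM] X :=
    (measurable_snd.comp (measurable_snd.comp measurable_snd)).comp hVMM
  set G : Ω → ℝ := fun ω => q1 (Z ω, M ω, X ω) with hGdef
  -- rewrite the goal in indicator form and conclude
  set φ : Ω → ℝ := fun ω =>
      ((μ[|{ω' | A ω' = 0}])[(fun ω' => q0 (Z ω', X ω')) | mm]) ω *
      ((μ[(fun ω' => if A ω' = 0 then (1:ℝ) else 0) | mm]) ω /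
       (μ[(fun ω' => if A ω' = 1 then (1:ℝ) else 0) | mm]) ω) with hφdef
  have hL : ∀ ω, (if A ω = 1 then (1:ℝ) else 0) * φ ω * Y ω = s.indicator φ ω * Y ω := by
    intro ω
    by_cases hA1 : A ω = 1
    · rw [if_pos hA1, Set.indicator_of_mem (by exact hA1), one_mul]
    · rw [if_neg hA1, Set.indicator_of_notMem (by exact hA1)]
      ring
  have hR : ∀ ω, (if A ω = 1 then (1:ℝ) else 0) * Y ω * G ω = s.indicator G ω * Y ω := by
    intro ω
    by_cases hA1 : A ω = 1
    · rw [if_pos hA1, Set.indicator_of_mem (by exact hA1), one_mul, mul_comm]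
    · rw [if_neg hA1, Set.indicator_of_notMem (by exact hA1)]
      ring
  have hint1' : Integrable (fun ω => s.indicator φ ω * Y ω) μ :=
    hint1.congr (Filter.Eventually.of_forall fun ω => hL ω)
  have hint2' : Integrable (fun ω => s.indicator G ω * Y ω) μ :=
    hint2.congr (Filter.Eventually.of_forall fun ω => hR ω)
  calc ∫ ω, (if A ω = 1 then (1:ℝ) else 0) * φ ω * Y ω ∂μ
      = ∫ ω, s.indicator φ ω * Y ω ∂μ := by
        exact integral_congr_ae (Filter.Eventually.of_forall fun ω => hL ω)
    _ = ∫ ω, s.indicator G ω * Y ω ∂μ :=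
        stmt6_aux_main2 μ hmmMM hMMle hAMM hMMM hXMM hsdef hs𝔪 htrace hZ hY hYint
          q1 hq1 hq1int hZYW hb hint1' hint2'
    _ = ∫ ω, (if A ω = 1 then (1:ℝ) else 0) * Y ω * G ω ∂μ := by
        exact (integral_congr_ae (Filter.Eventually.of_forall fun ω => hR ω)).symm
end

section
/- Let $A\in\{0,1\}$, $0<\mathbb{P}(A=0\mid U,M,X)<1$ a.s., and suppose $q_0$ satisfies $\frac{\mathbb{P}(A=1\mid U,X)}{\mathbb{P}(A=0\mid U,X)} = \mathbb{E}[q_0(Z,X)\mid U,A=0,X]$ a.s. together with $Z\perp(W,M)\mid(U,A,X)$. Then for any integrable $\phi(U,M,X)$, $\mathbb{E}\Big[\mathbf{1}(A=0)\,\frac{\mathbb{P}(A=1\mid U,X)}{\mathbb{P}(A=0\mid U,X)}\,\phi(U,M,X)\Big] = \mathbb{E}\big[\mathbf{1}(A=0)\,q_0(Z,X)\,\phi(U,M,X)\big]$, provided additionally $\mathbb{E}[q_0(Z,X)\mid U,A=0,X] = \mathbb{E}[q_0(Z,X)\mid U,A=0,M,X]$ a.s. -/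
open MeasureTheory ProbabilityTheory

/-- under the exposure-bridge equation for `q₀`, `Z ⊥ (W,M) | (U,A,X)`,
and the resulting equality of conditional means given `(U,X)` and `(U,M,X)` on `{A=0}`,
for any integrable `φ(U,M,X)`:
`E[1(A=0)·(P(A=1|U,X)/P(A=0|U,X))·φ(U,M,X)] = E[1(A=0)·q₀(Z,X)·φ(U,M,X)]`. -/
theorem stmt18 {Ω : Type*} [MeasurableSpace Ω] [StandardBorelSpace Ω] [Nonempty Ω]
    (μ : Measure Ω) [IsProbabilityMeasure μ]
    (A U Z W M X : Ω → ℝ)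
    (hA : Measurable A) (hU : Measurable U) (hZ : Measurable Z) (hW : Measurable W)
    (hM : Measurable M) (hX : Measurable X)
    (hAbin : ∀ ω, A ω = 0 ∨ A ω = 1)
    (q0 : ℝ × ℝ → ℝ) (hq0meas : Measurable q0)
    (hq0int : Integrable (fun ω => q0 (Z ω, X ω)) μ)
    -- positivity: 0 < P(A=0 | U,M,X) < 1 a.s.
    (hpos : ∀ᵐ ω ∂μ,
      0 < (μ[(fun ω' => if A ω' = 0 then (1:ℝ) else 0) |
            MeasurableSpace.comap (fun ω' => (U ω', M ω', X ω')) inferInstance]) ω ∧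
      (μ[(fun ω' => if A ω' = 0 then (1:ℝ) else 0) |
            MeasurableSpace.comap (fun ω' => (U ω', M ω', X ω')) inferInstance]) ω < 1)
    -- exposure bridge: P(A=1|U,X)/P(A=0|U,X) = E[q₀(Z,X) | U, A=0, X] a.s.
    (hbridge : (fun ω =>
        (μ[(fun ω' => if A ω' = 1 then (1:ℝ) else 0) |
            MeasurableSpace.comap (fun ω' => (U ω', X ω')) inferInstance]) ω /
        (μ[(fun ω' => if A ω' = 0 then (1:ℝ) else 0) |
            MeasurableSpace.comap (fun ω' => (U ω', X ω')) inferInstance]) ω)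
        =ᵐ[μ[|{ω | A ω = 0}]]
      (μ[|{ω | A ω = 0}])[(fun ω => q0 (Z ω, X ω)) |
        MeasurableSpace.comap (fun ω => (U ω, X ω)) inferInstance])
    -- Z ⊥ (W,M) | (U,A,X)
    (hZWM : CondIndepFun
      (MeasurableSpace.comap (fun ω => (U ω, A ω, X ω)) inferInstance)
      ((hU.prodMk (hA.prodMk hX)).comap_le) Z (fun ω => (W ω, M ω)) μ)
    -- E[q₀(Z,X) | U, A=0, X] = E[q₀(Z,X) | U, A=0, M, X] a.s.
    (hcm : (μ[|{ω | A ω = 0}])[(fun ω => q0 (Z ω, X ω)) |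
        MeasurableSpace.comap (fun ω => (U ω, X ω)) inferInstance]
        =ᵐ[μ[|{ω | A ω = 0}]]
      (μ[|{ω | A ω = 0}])[(fun ω => q0 (Z ω, X ω)) |
        MeasurableSpace.comap (fun ω => (U ω, M ω, X ω)) inferInstance]) :
    ∀ φ : ℝ × ℝ × ℝ → ℝ, Measurable φ →
      Integrable (fun ω => φ (U ω, M ω, X ω)) μ →
      Integrable (fun ω => (if A ω = 0 then (1:ℝ) else 0) *
        ((μ[(fun ω' => if A ω' = 1 then (1:ℝ) else 0) |
            MeasurableSpace.comap (fun ω' => (U ω', X ω')) inferInstance]) ω /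
         (μ[(fun ω' => if A ω' = 0 then (1:ℝ) else 0) |
            MeasurableSpace.comap (fun ω' => (U ω', X ω')) inferInstance]) ω) *
        φ (U ω, M ω, X ω)) μ →
      Integrable (fun ω => (if A ω = 0 then (1:ℝ) else 0) * q0 (Z ω, X ω) *
        φ (U ω, M ω, X ω)) μ →
      ∫ ω, (if A ω = 0 then (1:ℝ) else 0) *
          ((μ[(fun ω' => if A ω' = 1 then (1:ℝ) else 0) |
              MeasurableSpace.comap (fun ω' => (U ω', X ω')) inferInstance]) ω /
           (μ[(fun ω' => if A ω' = 0 then (1:ℝ) else 0) |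
              MeasurableSpace.comap (fun ω' => (U ω', X ω')) inferInstance]) ω) *
          φ (U ω, M ω, X ω) ∂μ
        = ∫ ω, (if A ω = 0 then (1:ℝ) else 0) * q0 (Z ω, X ω) * φ (U ω, M ω, X ω) ∂μ := by
  intro φ hφmeas hφint hint1 hint2
  classical
  set s : Set Ω := {ω | A ω = 0} with hs_def
  have hs : MeasurableSet s := hA (measurableSet_singleton 0)
  have hm'le := (hU.prodMk (hM.prodMk hX)).comap_le
  -- μ s ≠ 0
  have hcne : μ s ≠ 0 := by
    intro h0
    have hind0 : (fun ω' => if A ω' = 0 then (1:ℝ) else 0) =ᵐ[μ] 0 := by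
      have : {x | ¬ (fun ω' => if A ω' = 0 then (1:ℝ) else 0) x = (0:ℝ)} ⊆ s := by
        intro ω hω
        simp only [Set.mem_setOf_eq] at hω ⊢
        by_contra h
        exact hω (if_neg h)
      exact measure_mono_null this h0
    have hce0 : (μ[(fun ω' => if A ω' = 0 then (1:ℝ) else 0) | MeasurableSpace.comap (fun ω => (U ω, M ω, X ω)) inferInstance]) =ᵐ[μ] 0 :=
      (condExp_congr_ae hind0).trans (by simp [condExp_zero])
    obtain ⟨ω, hω1, hω2⟩ := ((hpos.and hce0).exists)
    rw [hω2] at hω1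
    exact lt_irrefl _ hω1.1
  have hcfin : μ s ≠ ⊤ := measure_ne_top μ s
  set ν : Measure Ω := μ[|s] with hν_def
  haveI hνprob : IsProbabilityMeasure ν := cond_isProbabilityMeasure hcne
  -- φ composed is m'-measurable
  have hφm' : StronglyMeasurable[MeasurableSpace.comap (fun ω => (U ω, M ω, X ω)) inferInstance] (fun ω => φ (U ω, M ω, X ω)) := by
    refine Measurable.stronglyMeasurable ?_
    exact hφmeas.comp (Measurable.of_comap_le le_rfl)
  -- integrability wrt ν
  have hq0ν : Integrable (fun ω => q0 (Z ω, X ω)) ν := by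
    rw [hν_def, ProbabilityTheory.cond]
    exact (hq0int.restrict).smul_measure (by simp [hcne])
  have hprodν : Integrable (fun ω => φ (U ω, M ω, X ω) * q0 (Z ω, X ω)) ν := by
    rw [hν_def, ProbabilityTheory.cond]
    refine Integrable.smul_measure ?_ (by simp [hcne])
    have h2 : Integrable (fun ω => (if A ω = 0 then (1:ℝ) else 0) * q0 (Z ω, X ω) *
        φ (U ω, M ω, X ω)) (μ.restrict s) := hint2.restrict
    refine h2.congr ?_
    filter_upwards [ae_restrict_mem hs] with ω hω
    have hA0 : A ω = 0 := hω
    simp [hA0, mul_comm]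
  -- pull-out
  have hpull : ν[(fun ω => φ (U ω, M ω, X ω) * q0 (Z ω, X ω)) | MeasurableSpace.comap (fun ω => (U ω, M ω, X ω)) inferInstance] =ᵐ[ν]
      (fun ω => φ (U ω, M ω, X ω)) * ν[(fun ω => q0 (Z ω, X ω)) | MeasurableSpace.comap (fun ω => (U ω, M ω, X ω)) inferInstance] :=
    condExp_mul_of_stronglyMeasurable_left hφm' hprodν hq0ν
  -- key equality over ν
  have hkey : ∫ ω, ((μ[(fun ω' => if A ω' = 1 then (1:ℝ) else 0) |
          MeasurableSpace.comap (fun ω' => (U ω', X ω')) inferInstance]) ω /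
        (μ[(fun ω' => if A ω' = 0 then (1:ℝ) else 0) |
          MeasurableSpace.comap (fun ω' => (U ω', X ω')) inferInstance]) ω) *
        φ (U ω, M ω, X ω) ∂ν
      = ∫ ω, q0 (Z ω, X ω) * φ (U ω, M ω, X ω) ∂ν := by
    have h1 : ∫ ω, ((μ[(fun ω' => if A ω' = 1 then (1:ℝ) else 0) |
            MeasurableSpace.comap (fun ω' => (U ω', X ω')) inferInstance]) ω /
          (μ[(fun ω' => if A ω' = 0 then (1:ℝ) else 0) |
            MeasurableSpace.comap (fun ω' => (U ω', X ω')) inferInstance]) ω) *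
          φ (U ω, M ω, X ω) ∂ν
        = ∫ ω, (ν[(fun ω => q0 (Z ω, X ω)) | MeasurableSpace.comap (fun ω => (U ω, M ω, X ω)) inferInstance]) ω * φ (U ω, M ω, X ω) ∂ν := by
      refine integral_congr_ae ?_
      filter_upwards [hbridge, hcm] with ω h1 h2
      rw [h1, h2]
    rw [h1]
    have h2 : ∫ ω, (ν[(fun ω => q0 (Z ω, X ω)) | MeasurableSpace.comap (fun ω => (U ω, M ω, X ω)) inferInstance]) ω * φ (U ω, M ω, X ω) ∂ν
        = ∫ ω, ((fun ω => φ (U ω, M ω, X ω)) * ν[(fun ω => q0 (Z ω, X ω)) | MeasurableSpace.comap (fun ω => (U ω, M ω, X ω)) inferInstance]) ω ∂ν := by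
      refine integral_congr_ae (Filter.Eventually.of_forall fun ω => ?_)
      simp [mul_comm]
    rw [h2, ← integral_congr_ae hpull,
      integral_condExp hm'le (μ := ν) (f := fun ω => φ (U ω, M ω, X ω) * q0 (Z ω, X ω))]
    exact integral_congr_ae (Filter.Eventually.of_forall fun ω => mul_comm _ _)
  -- reduce both sides to ν integrals
  have hind : ∀ g : Ω → ℝ, (fun ω => (if A ω = 0 then (1:ℝ) else 0) * g ω)
      = s.indicator g := by
    intro g; funext ω
    by_cases h : A ω = 0 <;> simp [Set.indicator, hs_def, h]
  have hresν : ∀ g : Ω → ℝ, ∫ ω, g ω ∂(μ.restrict s) = (μ s).toReal * ∫ ω, g ω ∂ν := by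
    intro g
    rw [hν_def, ProbabilityTheory.cond, integral_smul_measure, ENNReal.toReal_inv, smul_eq_mul,
      ← mul_assoc, mul_inv_cancel₀ (by simp [ENNReal.toReal_ne_zero, hcne, hcfin]), one_mul]
  calc ∫ ω, (if A ω = 0 then (1:ℝ) else 0) *
          ((μ[(fun ω' => if A ω' = 1 then (1:ℝ) else 0) |
              MeasurableSpace.comap (fun ω' => (U ω', X ω')) inferInstance]) ω /
           (μ[(fun ω' => if A ω' = 0 then (1:ℝ) else 0) |
              MeasurableSpace.comap (fun ω' => (U ω', X ω')) inferInstance]) ω) *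
          φ (U ω, M ω, X ω) ∂μ
      = (μ s).toReal * ∫ ω, ((μ[(fun ω' => if A ω' = 1 then (1:ℝ) else 0) |
              MeasurableSpace.comap (fun ω' => (U ω', X ω')) inferInstance]) ω /
           (μ[(fun ω' => if A ω' = 0 then (1:ℝ) else 0) |
              MeasurableSpace.comap (fun ω' => (U ω', X ω')) inferInstance]) ω) *
          φ (U ω, M ω, X ω) ∂ν := by
        simp_rw [mul_assoc]
        rw [hind, integral_indicator hs, hresν]
    _ = (μ s).toReal * ∫ ω, q0 (Z ω, X ω) * φ (U ω, M ω, X ω) ∂ν := by rw [hkey]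
    _ = ∫ ω, (if A ω = 0 then (1:ℝ) else 0) * q0 (Z ω, X ω) * φ (U ω, M ω, X ω) ∂μ := by
        simp_rw [mul_assoc]
        rw [hind, integral_indicator hs, hresν]
end
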